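/- arXiv:2310.05783 — 6 statements merged into one kernel-verified Lean document; each statement's English description precedes it below -/
import Mathlib

section
/- Let V be a finite-dimensional ℤ/2ℤ-vector space equipped with a nondegenerate symmetric bilinear form ⟨·,·⟩, and let f : V → V be a linear isomorphism preserving the form. Then there exists a quadratic refinement q of ⟨·,·⟩ such that q(f(x)) = q(x) for all x ∈ V. -/
/-!
If `f` preserves `B`, then `q₀ ∘ f` is again a quadratic refinement, so the defect
`g = q₀ ∘ f - q₀` is linear. It vanishes on the fixed vectors of `f`, i.e. on `ker (f - 1)`,
hence lies in the range of the dual map of `f - 1`: `g = l ∘ (f - 1)` for a linear form `l`.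
Then `q₀ - l` is a refinement whose defect is `g - l ∘ (f - 1) = 0`.
-/

/-- A quadratic refinement of a bilinear form `B` on a `ZMod 2`-vector space. -/
def IsQuadRef {V : Type*} [AddCommGroup V] [Module (ZMod 2) V]
    (B : V → V → ZMod 2) (q : V → ZMod 2) : Prop :=
  ∀ x y, q (x + y) = q x + q y + B x y

namespace IsQuadRef

variable {V : Type*} [AddCommGroup V] [Module (ZMod 2) V] {B : V → V → ZMod 2}
  {q q' : V → ZMod 2}

theorem comp (hq : IsQuadRef B q) (f : V →ₗ[ZMod 2] V) (hf : ∀ x y, B (f x) (f y) = B x y) :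
    IsQuadRef B (q ∘ f) := fun x y => by
  simp only [Function.comp_apply, map_add, hq (f x) (f y), hf]

theorem sub_dual (hq : IsQuadRef B q) (l : Module.Dual (ZMod 2) V) :
    IsQuadRef B (fun x => q x - l x) := fun x y => by
  simp only [hq x y, map_add]
  ring

theorem exists_dual_eq_sub (hq : IsQuadRef B q) (hq' : IsQuadRef B q') :
    ∃ g : Module.Dual (ZMod 2) V, ∀ x, g x = q x - q' x :=
  ⟨(AddMonoidHom.mk' (fun x => q x - q' x) fun x y => by rw [hq, hq']; ring).toZModLinearMap 2,
    fun _ => rfl⟩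

theorem exists_invariant (hq : IsQuadRef B q) (f : V →ₗ[ZMod 2] V)
    (hf : ∀ x y, B (f x) (f y) = B x y) :
    ∃ q' : V → ZMod 2, IsQuadRef B q' ∧ ∀ x, q' (f x) = q' x := by
  obtain ⟨g, hg⟩ := (hq.comp f hf).exists_dual_eq_sub hq
  have hg_fixed : g ∈ (LinearMap.ker (f - LinearMap.id)).dualAnnihilator := by
    refine (Submodule.mem_dualAnnihilator g).2 fun x hx => ?_
    have hfx : f x = x := sub_eq_zero.1 hx
    rw [hg, Function.comp_apply, hfx, sub_self]
  rw [← LinearMap.range_dualMap_eq_dualAnnihilator_ker] at hg_fixed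
  obtain ⟨l, hl⟩ := hg_fixed
  refine ⟨fun x => q x - l x, hq.sub_dual l, fun x => ?_⟩
  have hlx : l (f x) - l x = q (f x) - q x := by
    simpa [hg] using LinearMap.congr_fun hl x
  linear_combination -hlx

end IsQuadRef

theorem exists_invariant_quadRef_general {V : Type*} [AddCommGroup V] [Module (ZMod 2) V]
    (B : V →ₗ[ZMod 2] V →ₗ[ZMod 2] ZMod 2)
    (f : V ≃ₗ[ZMod 2] V) (hf : ∀ x y, B (f x) (f y) = B x y)
    (hex : ∃ q₀ : V → ZMod 2, IsQuadRef (fun x y => B x y) q₀) :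
    ∃ q : V → ZMod 2, IsQuadRef (fun x y => B x y) q ∧ ∀ x, q (f x) = q x := by
  obtain ⟨q₀, hq₀⟩ := hex
  exact hq₀.exists_invariant f.toLinearMap hf

/-- A linear automorphism preserving a nondegenerate symmetric bilinear form
(admitting a quadratic refinement) on a finite-dimensional `ZMod 2`-vector space has an
invariant quadratic refinement. -/
theorem exists_invariant_quadRef {V : Type*} [AddCommGroup V] [Module (ZMod 2) V]
    [FiniteDimensional (ZMod 2) V]
    (B : V →ₗ[ZMod 2] V →ₗ[ZMod 2] ZMod 2) (hsymm : ∀ x y, B x y = B y x)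
    (hnondeg : ∀ x, (∀ y, B x y = 0) → x = 0)
    (f : V ≃ₗ[ZMod 2] V) (hf : ∀ x y, B (f x) (f y) = B x y)
    (hex : ∃ q₀ : V → ZMod 2, IsQuadRef (fun x y => B x y) q₀) :
    ∃ q : V → ZMod 2, IsQuadRef (fun x y => B x y) q ∧ ∀ x, q (f x) = q x :=
  exists_invariant_quadRef_general B f hf hex
end

section
/- Let V be a finite-dimensional ℤ/2ℤ-vector space with a symmetric bilinear form ⟨·,·⟩ admitting at least one quadratic refinement, and let f : V → V be a linear isomorphism preserving the form that fixes some quadratic refinement q₀ (i.e., q₀ ∘ f = q₀). Then the number of f-invariant quadratic refinements of ⟨·,·⟩ equals 2^d, where d = dim ker(f - id). -/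
theorem LinearMap.finrank_ker_dualMap_eq {K V : Type*} [Field K] [AddCommGroup V] [Module K V]
    [FiniteDimensional K V] (g : V →ₗ[K] V) :
    Module.finrank K (ker g.dualMap) = Module.finrank K (ker g) := by
  have hdual := g.dualMap.finrank_range_add_finrank_ker
  have hprimal := g.finrank_range_add_finrank_ker
  rw [finrank_range_dualMap_eq_finrank_range, Subspace.dual_finrank_eq] at hdual
  omega

theorem LinearMap.mem_ker_dualMap_sub_id_iff {R M : Type*} [CommRing R] [AddCommGroup M]
    [Module R M] (f : M →ₗ[R] M) (ε : Module.Dual R M) :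
    ε ∈ ker (f - id).dualMap ↔ ∀ x, ε (f x) = ε x := by
  simp only [mem_ker, LinearMap.ext_iff, dualMap_apply, sub_apply, id_apply, map_sub,
    zero_apply, sub_eq_zero]

namespace IsQuadRef

variable {V : Type*} [AddCommGroup V] [Module (ZMod 2) V] {B : V → V → ZMod 2}
  {q q₀ : V → ZMod 2}

theorem sub_map_add (hq : IsQuadRef B q) (hq₀ : IsQuadRef B q₀) (x y : V) :
    q (x + y) - q₀ (x + y) = (q x - q₀ x) + (q y - q₀ y) := by
  rw [hq, hq₀]
  ring

def sub (hq : IsQuadRef B q) (hq₀ : IsQuadRef B q₀) : Module.Dual (ZMod 2) V :=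
  (AddMonoidHom.mk' (fun x => q x - q₀ x) (hq.sub_map_add hq₀)).toZModLinearMap 2

@[simp]
theorem sub_apply (hq : IsQuadRef B q) (hq₀ : IsQuadRef B q₀) (x : V) :
    hq.sub hq₀ x = q x - q₀ x :=
  rfl

theorem add_dual (hq₀ : IsQuadRef B q₀) (ε : Module.Dual (ZMod 2) V) :
    IsQuadRef B (fun x => q₀ x + ε x) := by
  intro x y
  dsimp only
  rw [hq₀, map_add]
  ring

def equivDual (hq₀ : IsQuadRef B q₀) : {q // IsQuadRef B q} ≃ Module.Dual (ZMod 2) V where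
  toFun q := q.2.sub hq₀
  invFun ε := ⟨_, hq₀.add_dual ε⟩
  left_inv q := by ext x; simp
  right_inv ε := by ext x; simp

def invariantEquivKerDualMap (f : V →ₗ[ZMod 2] V) (hq₀ : IsQuadRef B q₀)
    (hinv₀ : ∀ x, q₀ (f x) = q₀ x) :
    {q // IsQuadRef B q ∧ ∀ x, q (f x) = q x} ≃ LinearMap.ker (f - LinearMap.id).dualMap :=
  (Equiv.subtypeSubtypeEquivSubtypeInter _ _).symm.trans <|
    (equivDual hq₀).subtypeEquiv fun q => by
      rw [LinearMap.mem_ker_dualMap_sub_id_iff]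
      simp [equivDual, hinv₀]

end IsQuadRef

theorem card_invariant_quadRefs_general {V : Type*} [AddCommGroup V] [Module (ZMod 2) V]
    [FiniteDimensional (ZMod 2) V]
    (B : V →ₗ[ZMod 2] V →ₗ[ZMod 2] ZMod 2)
    (f : V ≃ₗ[ZMod 2] V)
    (q₀ : V → ZMod 2) (hq₀ : IsQuadRef (fun x y => B x y) q₀)
    (hinv₀ : ∀ x, q₀ (f x) = q₀ x) :
    Nat.card {q : V → ZMod 2 // IsQuadRef (fun x y => B x y) q ∧ ∀ x, q (f x) = q x} =
      2 ^ Module.finrank (ZMod 2) (LinearMap.ker (f.toLinearMap - LinearMap.id)) := by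
  have e := IsQuadRef.invariantEquivKerDualMap f.toLinearMap hq₀ hinv₀
  simp only [LinearEquiv.coe_coe] at e
  rw [Nat.card_congr e, Module.natCard_eq_pow_finrank (K := ZMod 2), Nat.card_zmod,
    LinearMap.finrank_ker_dualMap_eq]

/-- If a form-preserving automorphism `f` fixes some quadratic refinement `q₀`,
then the number of `f`-invariant quadratic refinements equals `2 ^ dim ker (f - id)`. -/
theorem card_invariant_quadRefs {V : Type*} [AddCommGroup V] [Module (ZMod 2) V]
    [FiniteDimensional (ZMod 2) V]
    (B : V →ₗ[ZMod 2] V →ₗ[ZMod 2] ZMod 2) (hsymm : ∀ x y, B x y = B y x)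
    (f : V ≃ₗ[ZMod 2] V) (hf : ∀ x y, B (f x) (f y) = B x y)
    (q₀ : V → ZMod 2) (hq₀ : IsQuadRef (fun x y => B x y) q₀)
    (hinv₀ : ∀ x, q₀ (f x) = q₀ x) :
    Nat.card {q : V → ZMod 2 // IsQuadRef (fun x y => B x y) q ∧ ∀ x, q (f x) = q x} =
      2 ^ Module.finrank (ZMod 2) (LinearMap.ker (f.toLinearMap - LinearMap.id)) :=
  card_invariant_quadRefs_general B f q₀ hq₀ hinv₀
end

section
/- Let V be a finite-dimensional ℤ/2ℤ-vector space with a symmetric bilinear form ⟨·,·⟩ with ⟨x,x⟩ = 0 for all x, and let f be a form-preserving linear automorphism of V such that f - id is bijective. Then the function q(x) := ⟨x, (f - id)⁻¹(x)⟩ is the unique f-invariant quadratic refinement of ⟨·,·⟩. -/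
section Refinement

variable {V : Type*} [AddCommGroup V] [Module (ZMod 2) V]

theorem IsQuadRef.apply_sub_of_invariant {B : V → V → ZMod 2} {q : V → ZMod 2}
    (hq : IsQuadRef B q) {f : V → V} (hinv : ∀ x, q (f x) = q x) (u : V) :
    q (f u - u) = B (f u) u := by
  rw [ZModModule.sub_eq_add, hq, hinv, ZModModule.add_self, zero_add]

theorem IsQuadRef.eq_of_invariant {B : V → V → ZMod 2} {q₁ q₂ : V → ZMod 2}
    (hq₁ : IsQuadRef B q₁) (hq₂ : IsQuadRef B q₂) {f : V → V}
    (hinv₁ : ∀ x, q₁ (f x) = q₁ x) (hinv₂ : ∀ x, q₂ (f x) = q₂ x)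
    (hsurj : Function.Surjective fun u => f u - u) : q₁ = q₂ := by
  funext x
  obtain ⟨u, rfl⟩ := hsurj x
  rw [hq₁.apply_sub_of_invariant hinv₁, hq₂.apply_sub_of_invariant hinv₂]

theorem isQuadRef_apply_symm (B : V →ₗ[ZMod 2] V →ₗ[ZMod 2] ZMod 2)
    (hsymm : ∀ x y, B x y = B y x) {F : Type*} [FunLike F V V] [AddMonoidHomClass F V V] {f : F}
    (hf : ∀ x y, B (f x) (f y) = B x y)
    (e : V ≃ₗ[ZMod 2] V) (he : ∀ x, e x = f x - x) :
    IsQuadRef (fun x y => B x y) (fun x => B x (e.symm x)) := by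
  intro x y
  obtain ⟨u, rfl⟩ := e.surjective x
  obtain ⟨v, rfl⟩ := e.surjective y
  simp only [← map_add e, LinearEquiv.symm_apply_apply]
  simp only [he, map_add, map_sub, LinearMap.add_apply, LinearMap.sub_apply]
  -- what is left over after `hsymm` and `hf` occurs twice, hence vanishes
  linear_combination hsymm (f v) u - hsymm v u - hf u v +
    (B (f u) v + B u (f v) - 2 * B u v) * (ZModModule.add_self (1 : ZMod 2))

end Refinement

theorem LinearEquiv.symm_apply_comm_of_apply_eq_sub {R M F : Type*} [Ring R] [AddCommGroup M]
    [Module R M] [FunLike F M M] [AddMonoidHomClass F M M] (f : F) (e : M ≃ₗ[R] M)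
    (he : ∀ x, e x = f x - x) (x : M) :
    e.symm (f x) = f (e.symm x) := by
  apply e.injective
  rw [e.apply_symm_apply, he, ← map_sub, ← he, e.apply_symm_apply]

theorem unique_invariant_quadRef_general {V : Type*} [AddCommGroup V] [Module (ZMod 2) V]
    (B : V →ₗ[ZMod 2] V →ₗ[ZMod 2] ZMod 2) (hsymm : ∀ x y, B x y = B y x)
    (f : V ≃ₗ[ZMod 2] V) (hf : ∀ x y, B (f x) (f y) = B x y)
    (e : V ≃ₗ[ZMod 2] V) (he : ∀ x, e x = f x - x) :
    (IsQuadRef (fun x y => B x y) (fun x => B x (e.symm x)) ∧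
      ∀ x, B (f x) (e.symm (f x)) = B x (e.symm x)) ∧
    ∀ q : V → ZMod 2, IsQuadRef (fun x y => B x y) q → (∀ x, q (f x) = q x) →
      q = fun x => B x (e.symm x) := by
  have hq₀ := isQuadRef_apply_symm B hsymm hf e he
  have hinv₀ : ∀ x, B (f x) (e.symm (f x)) = B x (e.symm x) := fun x => by
    rw [e.symm_apply_comm_of_apply_eq_sub f he, hf]
  have hsurj : Function.Surjective fun u => f u - u := by
    simpa only [← he] using e.surjective
  exact ⟨⟨hq₀, hinv₀⟩, fun q hq hinv => hq.eq_of_invariant hq₀ hinv hinv₀ hsurj⟩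

/-- If `f` preserves an alternating form and `f - id` is bijective (given here
as a linear equivalence `e` with `e x = f x - x`), then `q(x) := ⟨x, (f - id)⁻¹ x⟩` is the
unique `f`-invariant quadratic refinement. -/
theorem unique_invariant_quadRef {V : Type*} [AddCommGroup V] [Module (ZMod 2) V]
    [FiniteDimensional (ZMod 2) V]
    (B : V →ₗ[ZMod 2] V →ₗ[ZMod 2] ZMod 2) (hsymm : ∀ x y, B x y = B y x)
    (halt : ∀ x, B x x = 0)
    (f : V ≃ₗ[ZMod 2] V) (hf : ∀ x y, B (f x) (f y) = B x y)
    (e : V ≃ₗ[ZMod 2] V) (he : ∀ x, e x = f x - x) :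
    (IsQuadRef (fun x y => B x y) (fun x => B x (e.symm x)) ∧
      ∀ x, B (f x) (e.symm (f x)) = B x (e.symm x)) ∧
    ∀ q : V → ZMod 2, IsQuadRef (fun x y => B x y) q → (∀ x, q (f x) = q x) →
      q = fun x => B x (e.symm x) :=
  unique_invariant_quadRef_general B hsymm f hf e he
end

section
/- Let V be a 2g-dimensional ℤ/2ℤ-vector space with a nondegenerate alternating form and symplectic basis, let f be a form-preserving automorphism with an invariant quadratic refinement q₀, and let ξ₁,…,ξ_d be a basis of {ξ ∈ V* : ξ ∘ (f − id) = 0}. Then there exists an f-invariant quadratic refinement q with Arf(q) = 0 if and only if 0 belongs to the set {Arf(q₀)} ∪ {Arf(q₀+ξᵢ) : i} ∪ {Arf(q₀+ξᵢ+ξⱼ) : i ≠ j}. -/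
section ArfSum

variable {ι V : Type*} [Fintype ι] (a b : ι → V)

def arf (q : V → ZMod 2) : ZMod 2 := ∑ i, q (a i) * q (b i)

def arfCross (η θ : V → ZMod 2) : ZMod 2 := ∑ i, (η (a i) * θ (b i) + θ (a i) * η (b i))

theorem arf_add_add (q η θ : V → ZMod 2) :
    arf a b (q + η + θ) = arf a b (q + η) + arf a b (q + θ) + arf a b q + arfCross a b η θ := by
  simp only [arf, arfCross, ← Finset.sum_add_distrib]
  refine Finset.sum_congr rfl fun i _ => ?_
  simp only [Pi.add_apply]
  linear_combination -(q (a i) * q (b i)) * CharTwo.two_eq_zero (R := ZMod 2)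

theorem arfCross_sum_right {κ : Type*} (η : V → ZMod 2) (θ : κ → V → ZMod 2) (S : Finset κ) :
    arfCross a b η (∑ j ∈ S, θ j) = ∑ j ∈ S, arfCross a b η (θ j) := by
  simp only [arfCross, Finset.sum_apply, Finset.mul_sum, Finset.sum_mul, ← Finset.sum_add_distrib]
  exact Finset.sum_comm

theorem arf_add_sum_eq_one {κ : Type*} [DecidableEq κ] (q : V → ZMod 2) (ξ : κ → V → ZMod 2)
    (h₀ : arf a b q = 1) (h₁ : ∀ i, arf a b (q + ξ i) = 1)
    (h₂ : ∀ i j, i ≠ j → arf a b (q + ξ i + ξ j) = 1) (S : Finset κ) :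
    arf a b (q + ∑ j ∈ S, ξ j) = 1 := by
  have hcross : ∀ i j, i ≠ j → arfCross a b (ξ i) (ξ j) = 0 := by
    intro i j hij
    have h := arf_add_add a b q (ξ i) (ξ j)
    rw [h₂ i j hij, h₁ i, h₁ j, h₀] at h
    linear_combination -h - CharTwo.two_eq_zero (R := ZMod 2)
  induction S using Finset.induction_on with
  | empty => simpa using h₀
  | @insert i S hi ih =>
    have hcrossS : arfCross a b (ξ i) (∑ j ∈ S, ξ j) = 0 := by
      rw [arfCross_sum_right]
      exact Finset.sum_eq_zero fun j hj => hcross i j (ne_of_mem_of_not_mem hj hi).symm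
    rw [Finset.sum_insert hi, ← add_assoc, arf_add_add, h₁, ih, h₀, hcrossS]
    decide

end ArfSum

section Refinements

variable {V : Type*} [AddCommGroup V] [Module (ZMod 2) V] {B : V → V → ZMod 2} {q₀ : V → ZMod 2}

theorem IsQuadRef.add_linearMap (hq₀ : IsQuadRef B q₀) (η : V →ₗ[ZMod 2] ZMod 2) :
    IsQuadRef B (q₀ + η) := by
  intro x y
  simp only [Pi.add_apply, map_add, hq₀ x y]
  ring

theorem IsQuadRef.exists_linearMap_eq_add {q : V → ZMod 2} (hq : IsQuadRef B q)
    (hq₀ : IsQuadRef B q₀) : ∃ η : V →ₗ[ZMod 2] ZMod 2, q = q₀ + η :=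
  ⟨(AddMonoidHom.mk' (q - q₀) fun x y => by simp only [Pi.sub_apply, hq x y, hq₀ x y]; ring)
    |>.toZModLinearMap 2, by ext; simp⟩

end Refinements

theorem exists_finset_sum_eq_of_mem_span_range {ι M : Type*} [Fintype ι] [AddCommGroup M]
    [Module (ZMod 2) M] {v : ι → M} {x : M} (hx : x ∈ Submodule.span (ZMod 2) (Set.range v)) :
    ∃ S : Finset ι, ∑ i ∈ S, v i = x := by
  obtain ⟨c, rfl⟩ := (Submodule.mem_span_range_iff_exists_fun (ZMod 2)).1 hx
  refine ⟨Finset.univ.filter (c · = 1), ?_⟩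
  rw [Finset.sum_filter]
  refine Finset.sum_congr rfl fun i _ => ?_
  by_cases h : c i = 0
  · simp [h]
  · have h₁ : c i = 1 := Fin.eq_one_of_ne_zero _ h
    rw [if_pos h₁, h₁, one_smul]

theorem exists_invariant_arf_zero_iff_general {V : Type*} [AddCommGroup V] [Module (ZMod 2) V]
    (B : V →ₗ[ZMod 2] V →ₗ[ZMod 2] ZMod 2)
    (g : ℕ) (a b : Fin g → V)
    (f : V ≃ₗ[ZMod 2] V)
    (q₀ : V → ZMod 2) (hq₀ : IsQuadRef (fun x y => B x y) q₀)
    (hinv₀ : ∀ x, q₀ (f x) = q₀ x)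
    (d : ℕ) (ξ : Fin d → (V →ₗ[ZMod 2] ZMod 2))
    (hξ : ∀ i x, ξ i (f x - x) = 0)
    (hξspan : ∀ η : V →ₗ[ZMod 2] ZMod 2, (∀ x, η (f x - x) = 0) →
      η ∈ Submodule.span (ZMod 2) (Set.range ξ)) :
    (∃ q : V → ZMod 2, IsQuadRef (fun x y => B x y) q ∧ (∀ x, q (f x) = q x) ∧
        ∑ i, q (a i) * q (b i) = 0) ↔
      ((∑ i, q₀ (a i) * q₀ (b i)) = 0 ∨
        (∃ i, (∑ k, (q₀ (a k) + ξ i (a k)) * (q₀ (b k) + ξ i (b k))) = 0) ∨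
        (∃ i j, i ≠ j ∧
          (∑ k, (q₀ (a k) + ξ i (a k) + ξ j (a k)) * (q₀ (b k) + ξ i (b k) + ξ j (b k))) = 0)) := by
  have hinvξ : ∀ i x, ξ i (f x) = ξ i x := fun i x => sub_eq_zero.1 (by rw [← map_sub, hξ])
  change (∃ q, _ ∧ _ ∧ arf a b q = 0) ↔ (arf a b q₀ = 0 ∨ (∃ i, arf a b (q₀ + ξ i) = 0) ∨
    ∃ i j, i ≠ j ∧ arf a b (q₀ + ξ i + ξ j) = 0)
  constructor
  · rintro ⟨q, hq, hqinv, harf⟩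
    obtain ⟨η, rfl⟩ := hq.exists_linearMap_eq_add hq₀
    have hη : ∀ x, η (f x - x) = 0 := fun x => by
      rw [map_sub, sub_eq_zero]
      simpa [hinv₀] using hqinv x
    obtain ⟨S, rfl⟩ := exists_finset_sum_eq_of_mem_span_range (hξspan η hη)
    by_contra! h
    obtain ⟨h₀, h₁, h₂⟩ := h
    have harf_one := arf_add_sum_eq_one a b q₀ (fun i => ξ i) (Fin.eq_one_of_ne_zero _ h₀)
      (fun i => Fin.eq_one_of_ne_zero _ (h₁ i))
      (fun i j hij => Fin.eq_one_of_ne_zero _ (h₂ i j hij)) S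
    rw [LinearMap.coe_sum] at harf
    exact zero_ne_one (harf.symm.trans harf_one)
  · rintro (h | ⟨i, h⟩ | ⟨i, j, -, h⟩)
    · exact ⟨q₀, hq₀, hinv₀, h⟩
    · exact ⟨q₀ + ξ i, hq₀.add_linearMap _, fun x => by simp [hinv₀, hinvξ], h⟩
    · exact ⟨q₀ + ξ i + ξ j, (hq₀.add_linearMap _).add_linearMap _,
        fun x => by simp [hinv₀, hinvξ], h⟩

/-- Criterion for the existence of an `f`-invariant quadratic refinement with
Arf invariant `0`: with `q₀` an `f`-invariant refinement and `ξ₁,…,ξ_d` a basis of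
`{ξ ∈ V* : ξ ∘ (f − id) = 0}`, such a refinement exists iff `0` occurs among
`Arf(q₀)`, `Arf(q₀+ξᵢ)`, `Arf(q₀+ξᵢ+ξⱼ)` (`i ≠ j`). -/
theorem exists_invariant_arf_zero_iff {V : Type*} [AddCommGroup V] [Module (ZMod 2) V]
    [FiniteDimensional (ZMod 2) V]
    (B : V →ₗ[ZMod 2] V →ₗ[ZMod 2] ZMod 2) (hsymm : ∀ x y, B x y = B y x)
    (halt : ∀ x, B x x = 0)
    (g : ℕ) (a b : Fin g → V)
    (hab : ∀ i j, B (a i) (b j) = if i = j then 1 else 0)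
    (haa : ∀ i j, B (a i) (a j) = 0) (hbb : ∀ i j, B (b i) (b j) = 0)
    (bas : Module.Basis (Fin g ⊕ Fin g) (ZMod 2) V)
    (hbas : ∀ i, bas (Sum.inl i) = a i ∧ bas (Sum.inr i) = b i)
    (f : V ≃ₗ[ZMod 2] V) (hf : ∀ x y, B (f x) (f y) = B x y)
    (q₀ : V → ZMod 2) (hq₀ : IsQuadRef (fun x y => B x y) q₀)
    (hinv₀ : ∀ x, q₀ (f x) = q₀ x)
    (d : ℕ) (ξ : Fin d → (V →ₗ[ZMod 2] ZMod 2))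
    (hξ : ∀ i x, ξ i (f x - x) = 0)
    (hξindep : LinearIndependent (ZMod 2) ξ)
    (hξspan : ∀ η : V →ₗ[ZMod 2] ZMod 2, (∀ x, η (f x - x) = 0) →
      η ∈ Submodule.span (ZMod 2) (Set.range ξ)) :
    (∃ q : V → ZMod 2, IsQuadRef (fun x y => B x y) q ∧ (∀ x, q (f x) = q x) ∧
        ∑ i, q (a i) * q (b i) = 0) ↔
      ((∑ i, q₀ (a i) * q₀ (b i)) = 0 ∨
        (∃ i, (∑ k, (q₀ (a k) + ξ i (a k)) * (q₀ (b k) + ξ i (b k))) = 0) ∨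
        (∃ i j, i ≠ j ∧
          (∑ k, (q₀ (a k) + ξ i (a k) + ξ j (a k)) * (q₀ (b k) + ξ i (b k) + ξ j (b k))) = 0)) :=
  exists_invariant_arf_zero_iff_general B g a b f q₀ hq₀ hinv₀ d ξ hξ hξspan
end

section
/- Let V = (ℤ/2ℤ)^6 with basis c₁,…,c₆ and bilinear form cᵢ·cⱼ = 1 iff |i−j| = 1. Let f : V → V be the linear map with f(c₁)=c₁+c₂+c₃, f(c₂)=c₁+c₃+c₄, f(c₃)=c₅, f(c₄)=c₁+c₄+c₅, f(c₅)=c₁+c₄+c₅+c₆, f(c₆)=c₁+c₂+c₄+c₅+c₆. Then every quadratic refinement q of the form with q∘f = q has Arf invariant 1, where Arf(q) = Σ_{i=1}^{3} q(c_{2i})·(Σ_{j=1}^{i} q(c_{2j−1})). -/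
/-- The standard basis vectors `c₁, …, c₆` (indexed `0, …, 5`) of `(ZMod 2)^6`. -/
def cvec (i : Fin 6) : Fin 6 → ZMod 2 := Pi.single i 1

/-- The intersection form with `cᵢ · cⱼ = 1` iff `|i − j| = 1`. -/
def Bchain (x y : Fin 6 → ZMod 2) : ZMod 2 :=
  ∑ i : Fin 5, (x i.castSucc * y i.succ + x i.succ * y i.castSucc)


/-!
Expanding `q (f cᵢ)` with `q (x + y) = q x + q y + x · y` turns invariance into linear equations
over `ZMod 2` in the values `q cᵢ`. This system forces `q (c₀, …, c₅) = (t + 1, t, t, t, t, 1)`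
with `t = q c₂`, and the Arf invariant is `1` for both values of `t`.
-/

theorem Bchain_add_left (x y z : Fin 6 → ZMod 2) :
    Bchain (x + y) z = Bchain x z + Bchain y z := by
  simp only [Bchain, Pi.add_apply, add_mul, ← Finset.sum_add_distrib]
  exact Finset.sum_congr rfl fun _ _ => by ring

theorem Bchain_cvec_cvec (i j : Fin 6) :
    Bchain (cvec i) (cvec j) = if (i : ℕ) + 1 = j ∨ (j : ℕ) + 1 = i then 1 else 0 := by
  revert i j
  decide

theorem IsQuadRef.cvec_eq_of_invariant (f : (Fin 6 → ZMod 2) →ₗ[ZMod 2] (Fin 6 → ZMod 2))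
    (hf0 : f (cvec 0) = cvec 0 + cvec 1 + cvec 2)
    (hf1 : f (cvec 1) = cvec 0 + cvec 2 + cvec 3)
    (hf2 : f (cvec 2) = cvec 4)
    (hf3 : f (cvec 3) = cvec 0 + cvec 3 + cvec 4)
    (hf4 : f (cvec 4) = cvec 0 + cvec 3 + cvec 4 + cvec 5)
    {q : (Fin 6 → ZMod 2) → ZMod 2} (hq : IsQuadRef Bchain q) (hinv : ∀ x, q (f x) = q x) :
    q (cvec 0) = q (cvec 2) + 1 ∧ q (cvec 1) = q (cvec 2) ∧ q (cvec 3) = q (cvec 2) ∧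
      q (cvec 4) = q (cvec 2) ∧ q (cvec 5) = 1 := by
  have E0 : q (cvec 0 + cvec 1 + cvec 2) = q (cvec 0) := hf0 ▸ hinv _
  have E1 : q (cvec 0 + cvec 2 + cvec 3) = q (cvec 1) := hf1 ▸ hinv _
  have E2 : q (cvec 4) = q (cvec 2) := hf2 ▸ hinv _
  have E3 : q (cvec 0 + cvec 3 + cvec 4) = q (cvec 3) := hf3 ▸ hinv _
  have E4 : q (cvec 0 + cvec 3 + cvec 4 + cvec 5) = q (cvec 4) := hf4 ▸ hinv _
  simp only [hq _ _, Bchain_add_left, Bchain_cvec_cvec] at E0 E1 E3 E4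
  norm_num at E0 E1 E3 E4
  refine ⟨?_, ?_, ?_, E2, ?_⟩
  · linear_combination (norm := (ring_nf; reduce_mod_char)) E3 + E2
  · linear_combination (norm := (ring_nf; reduce_mod_char)) E0
  · linear_combination (norm := (ring_nf; reduce_mod_char)) E1 + E3 + E2 + E0
  · linear_combination (norm := (ring_nf; reduce_mod_char)) E4 + E1 + E0

theorem invariant_quadRefs_f37_arf_one_general
    (f : (Fin 6 → ZMod 2) →ₗ[ZMod 2] (Fin 6 → ZMod 2))
    (hf0 : f (cvec 0) = cvec 0 + cvec 1 + cvec 2)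
    (hf1 : f (cvec 1) = cvec 0 + cvec 2 + cvec 3)
    (hf2 : f (cvec 2) = cvec 4)
    (hf3 : f (cvec 3) = cvec 0 + cvec 3 + cvec 4)
    (hf4 : f (cvec 4) = cvec 0 + cvec 3 + cvec 4 + cvec 5) :
    ∀ q : (Fin 6 → ZMod 2) → ZMod 2, IsQuadRef Bchain q → (∀ x, q (f x) = q x) →
      (∑ i : Fin 3, q (cvec ((![1, 3, 5] : Fin 3 → Fin 6) i)) *
        ∑ j : Fin 3, if j ≤ i then q (cvec ((![0, 2, 4] : Fin 3 → Fin 6) j)) else 0) = 1 := by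
  intro q hq hinv
  obtain ⟨h0, h1, h3, h4, h5⟩ := hq.cvec_eq_of_invariant f hf0 hf1 hf2 hf3 hf4 hinv
  simp only [Fin.sum_univ_three, Matrix.cons_val_zero, Matrix.cons_val_one, Matrix.cons_val_two,
    Matrix.head_cons, Matrix.tail_cons]
  rw [h0, h1, h3, h4, h5]
  generalize q (cvec 2) = t
  revert t
  decide

/-- For the linear map `f` (the homology action of the order-8 map `f_{3,7}`),
every `f`-invariant quadratic refinement of the chain form has Arf invariant
`Σ_{i=1}^{3} q(c_{2i})·(Σ_{j=1}^{i} q(c_{2j−1})) = 1`. -/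
theorem invariant_quadRefs_f37_arf_one
    (f : (Fin 6 → ZMod 2) →ₗ[ZMod 2] (Fin 6 → ZMod 2))
    (hf0 : f (cvec 0) = cvec 0 + cvec 1 + cvec 2)
    (hf1 : f (cvec 1) = cvec 0 + cvec 2 + cvec 3)
    (hf2 : f (cvec 2) = cvec 4)
    (hf3 : f (cvec 3) = cvec 0 + cvec 3 + cvec 4)
    (hf4 : f (cvec 4) = cvec 0 + cvec 3 + cvec 4 + cvec 5)
    (hf5 : f (cvec 5) = cvec 0 + cvec 1 + cvec 3 + cvec 4 + cvec 5) :
    ∀ q : (Fin 6 → ZMod 2) → ZMod 2, IsQuadRef Bchain q → (∀ x, q (f x) = q x) →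
      (∑ i : Fin 3, q (cvec ((![1, 3, 5] : Fin 3 → Fin 6) i)) *
        ∑ j : Fin 3, if j ≤ i then q (cvec ((![0, 2, 4] : Fin 3 → Fin 6) j)) else 0) = 1 :=
  invariant_quadRefs_f37_arf_one_general f hf0 hf1 hf2 hf3 hf4
end

section
/- Let V₁, …, V_k be ℤ/2ℤ-vector spaces with nondegenerate alternating forms and symplectic bases, each with a form-preserving automorphism fᵢ, and suppose for each i, every fᵢ-invariant quadratic refinement of Vᵢ has the same Arf invariant εᵢ ∈ ℤ/2ℤ. Then the direct sum automorphism f = f₁ ⊕ ⋯ ⊕ f_k on V₁ ⊕ ⋯ ⊕ V_k admits an invariant quadratic refinement with Arf invariant 0 if and only if ε₁ + ⋯ + ε_k = 0 (assuming each fᵢ admits at least one invariant quadratic refinement). -/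
open Finset

lemma IsQuadRef.map_zero {V : Type*} [AddCommGroup V] [Module (ZMod 2) V]
    {B : V →ₗ[ZMod 2] V →ₗ[ZMod 2] ZMod 2} {q : V → ZMod 2}
    (hq : IsQuadRef (fun x y => B x y) q) : q 0 = 0 := by
  have h : q (0 + 0) = q 0 + q 0 + B 0 0 := hq 0 0
  rwa [add_zero, LinearMap.map_zero₂, add_zero, CharTwo.add_self_eq_zero] at h

section Pi

variable {ι : Type*} [Fintype ι] {V : ι → Type*}

lemma IsQuadRef.pi [∀ i, AddCommGroup (V i)] [∀ i, Module (ZMod 2) (V i)]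
    {B : ∀ i, V i → V i → ZMod 2} {q : ∀ i, V i → ZMod 2}
    (hq : ∀ i, IsQuadRef (B i) (q i)) :
    IsQuadRef (fun x y : ∀ i, V i => ∑ i, B i (x i) (y i)) (fun x => ∑ i, q i (x i)) := by
  intro x y
  simp only [Pi.add_apply, hq _ (x _) (y _), sum_add_distrib]

variable [DecidableEq ι]

lemma IsQuadRef.comp_single [∀ i, AddCommGroup (V i)] [∀ i, Module (ZMod 2) (V i)]
    {B : ∀ i, V i →ₗ[ZMod 2] V i →ₗ[ZMod 2] ZMod 2}
    {q : (∀ i, V i) → ZMod 2} (hq : IsQuadRef (fun x y => ∑ i, B i (x i) (y i)) q) (i : ι) :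
    IsQuadRef (fun x y => B i x y) (fun x => q (Pi.single i x)) := by
  intro x y
  have hB : ∑ l, B l (Pi.single i x l) (Pi.single i y l) = B i x y := by
    rw [Fintype.sum_eq_single i fun l hl => by simp [Pi.single_eq_of_ne hl]]
    simp
  simp only [Pi.single_add, hq _ _, hB]

lemma sum_apply_single {M : Type*} [AddCommMonoid M] [∀ i, Zero (V i)] {q : ∀ i, V i → M}
    (hq : ∀ i, q i 0 = 0) (i : ι) (x : V i) :
    ∑ l, q l (Pi.single i x l) = q i x := by
  rw [Fintype.sum_eq_single i fun l hl => by rw [Pi.single_eq_of_ne hl, hq]]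
  simp

end Pi

theorem directSum_invariant_arf_zero_iff_general (k : ℕ) (V : Fin k → Type*)
    [∀ i, AddCommGroup (V i)] [∀ i, Module (ZMod 2) (V i)]
    (B : ∀ i, V i →ₗ[ZMod 2] V i →ₗ[ZMod 2] ZMod 2)
    (f : ∀ i, V i ≃ₗ[ZMod 2] V i)
    (g : Fin k → ℕ) (a : ∀ i, Fin (g i) → V i) (b : ∀ i, Fin (g i) → V i)
    (ε : Fin k → ZMod 2)
    (hexinv : ∀ i, ∃ q : V i → ZMod 2, IsQuadRef (fun x y => B i x y) q ∧
      ∀ x, q (f i x) = q x)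
    (hε : ∀ i, ∀ q : V i → ZMod 2, IsQuadRef (fun x y => B i x y) q →
      (∀ x, q (f i x) = q x) → (∑ j, q (a i j) * q (b i j)) = ε i) :
    (∃ q : (∀ i, V i) → ZMod 2,
      IsQuadRef (fun x y => ∑ i, B i (x i) (y i)) q ∧
      (∀ x, q (fun i => f i (x i)) = q x) ∧
      (∑ i, ∑ j, q (Pi.single i (a i j)) * q (Pi.single i (b i j))) = 0) ↔
    (∑ i, ε i) = 0 := by
  constructor
  · rintro ⟨q, hq, hinv, harf⟩
    have hinv_single (i : Fin k) (x : V i) : q (Pi.single i (f i x)) = q (Pi.single i x) := by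
      rw [← funext (Pi.apply_single (fun l => f l) (fun l => map_zero (f l)) i x)]
      exact hinv _
    rw [← harf]
    exact sum_congr rfl fun i _ => (hε i _ (hq.comp_single i) (hinv_single i)).symm
  · intro hsum
    choose q hq hqinv using hexinv
    refine ⟨fun x => ∑ i, q i (x i), IsQuadRef.pi hq,
      fun x => sum_congr rfl fun i _ => hqinv i (x i), ?_⟩
    simp only [sum_apply_single (fun i => (hq i).map_zero)]
    rw [← hsum]
    exact sum_congr rfl fun i _ => hε i _ (hq i) (hqinv i)

/-- If each form-preserving automorphism `fᵢ` of `(Vᵢ, Bᵢ)` admits an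
invariant quadratic refinement, and every `fᵢ`-invariant refinement has Arf invariant
`εᵢ`, then the direct sum automorphism admits an invariant quadratic refinement with Arf
invariant `0` iff `ε₁ + ⋯ + ε_k = 0`. -/
theorem directSum_invariant_arf_zero_iff (k : ℕ) (V : Fin k → Type*)
    [∀ i, AddCommGroup (V i)] [∀ i, Module (ZMod 2) (V i)]
    (B : ∀ i, V i →ₗ[ZMod 2] V i →ₗ[ZMod 2] ZMod 2)
    (halt : ∀ i x, B i x x = 0)
    (f : ∀ i, V i ≃ₗ[ZMod 2] V i)
    (hf : ∀ i x y, B i (f i x) (f i y) = B i x y)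
    (g : Fin k → ℕ) (a : ∀ i, Fin (g i) → V i) (b : ∀ i, Fin (g i) → V i)
    (hab : ∀ i j l, B i (a i j) (b i l) = if j = l then 1 else 0)
    (haa : ∀ i j l, B i (a i j) (a i l) = 0) (hbb : ∀ i j l, B i (b i j) (b i l) = 0)
    (bas : ∀ i, Module.Basis (Fin (g i) ⊕ Fin (g i)) (ZMod 2) (V i))
    (hbas : ∀ i j, bas i (Sum.inl j) = a i j ∧ bas i (Sum.inr j) = b i j)
    (ε : Fin k → ZMod 2)
    (hexinv : ∀ i, ∃ q : V i → ZMod 2, IsQuadRef (fun x y => B i x y) q ∧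
      ∀ x, q (f i x) = q x)
    (hε : ∀ i, ∀ q : V i → ZMod 2, IsQuadRef (fun x y => B i x y) q →
      (∀ x, q (f i x) = q x) → (∑ j, q (a i j) * q (b i j)) = ε i) :
    (∃ q : (∀ i, V i) → ZMod 2,
      IsQuadRef (fun x y => ∑ i, B i (x i) (y i)) q ∧
      (∀ x, q (fun i => f i (x i)) = q x) ∧
      (∑ i, ∑ j, q (Pi.single i (a i j)) * q (Pi.single i (b i j))) = 0) ↔
    (∑ i, ε i) = 0 :=
  directSum_invariant_arf_zero_iff_general k V B f g a b ε hexinv hε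
end
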